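/- arXiv:2507.20041 — 2 statements merged into one kernel-verified Lean document; each statement's English description precedes it below -/
import Mathlib

section
/- In the double-collect validation scheme: if a reader observes version v₁ (even) before reading data and version v₂ after reading, and v₁ = v₂, then the data read is identical to the data at the moment of the first version read (no write occurred during the read interval). -/
/-!
A change of data at instant `n` forces `ver n` to be odd.  On `[t₁, t₂]` the monotone version is
squeezed between `ver t₁` and `ver t₂ = ver t₁`, so it is constantly the even value `ver t₁`;
hence no step inside the read interval changes the data.
-/

theorem Nat.apply_eq_of_forall_succ_eq {α : Type*} {f : ℕ → α} {a b : ℕ}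
    (hstep : ∀ n, a ≤ n → n < b → f (n + 1) = f n) {n : ℕ} (ha : a ≤ n) (hb : n ≤ b) :
    f n = f a := by
  induction n, ha using Nat.le_induction with
  | base => rfl
  | succ n han ih => rw [hstep n han hb, ih (Nat.le_of_succ_le hb)]

theorem Monotone.apply_eq_of_mem_Icc {α β : Type*} [Preorder α] [PartialOrder β] {f : α → β}
    (hf : Monotone f) {a b x : α} (hab : f a = f b) (hax : a ≤ x) (hxb : x ≤ b) :
    f x = f a :=
  le_antisymm (hab ▸ hf hxb) (hf hax)

/-- Double-collect validation: the shared object's version is monotonically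
non-decreasing over time and its data can change from one instant to the next
only while the version is odd (the 'dirty' phase of a write).  If a reader
observes an even version `v₁ = ver t₁` before reading the data, reads the data
at some time `t ∈ [t₁, t₂]`, and then observes `v₂ = ver t₂` with `v₁ = v₂`,
then the data it read is identical to the data at the moment of the first
version read (no write occurred during the read interval). -/
theorem double_collect_validation {D : Type*}
    (ver : ℕ → ℕ) (data : ℕ → D)
    (hmono : Monotone ver)
    (hdirty : ∀ t, data (t + 1) ≠ data t → Odd (ver t))
    (t₁ t t₂ : ℕ) (h₁ : t₁ ≤ t) (h₂ : t ≤ t₂)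
    (heven : Even (ver t₁)) (heq : ver t₁ = ver t₂) :
    data t = data t₁ := by
  refine Nat.apply_eq_of_forall_succ_eq (fun n hn hnt => ?_) h₁ h₂
  have hver : ver n = ver t₁ := hmono.apply_eq_of_mem_Icc heq hn hnt.le
  by_contra hchange
  exact Nat.not_odd_iff_even.mpr heven (hver ▸ hdirty n hchange)
end

section
/- In a doubly-linked list of leaf nodes with strictly increasing key ranges (for each leaf l, all keys in l.right exceed all keys in l), a traversal starting at the unique leaf whose key range contains lowKey and following right-pointers, stopping when a key greater than highKey is seen at a leaf with no further keys in range, visits every leaf whose key range intersects [lowKey, highKey]. -/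
/-! A leaf `[a i, a (i+1))` meets `[low, high]` exactly when `low ≤ high`, `a i ≤ high`
and `low < a (i+1)`. The last two conditions are monotone in the leaf index, in opposite
directions, so the leaves meeting the query form a block of consecutive indices; it starts at
`s`, because `a s ≤ low` rules out every earlier leaf. -/

theorem exists_Ico_Icc_iff {K : Type*} [LinearOrder K] {b c low high : K} (hbc : b < c) :
    (∃ x, b ≤ x ∧ x < c ∧ low ≤ x ∧ x ≤ high) ↔ low ≤ high ∧ b ≤ high ∧ low < c := by
  constructor
  · rintro ⟨x, hbx, hxc, hlx, hxh⟩
    exact ⟨hlx.trans hxh, hbx.trans hxh, hlx.trans_lt hxc⟩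
  · rintro ⟨hlh, hbh, hlc⟩
    exact ⟨max b low, le_max_left _ _, max_lt hbc hlc, le_max_right _ _, max_le hbh hlh⟩

theorem range_scan_visits_all_intersecting_leaves_general {K : Type*} [LinearOrder K]
    (n : ℕ) (a : ℕ → K)
    (hmono : ∀ i j, i < j → j ≤ n → a i < a j)
    (low high : K)
    (s : ℕ) (hs : s < n) (hsl : a s ≤ low) (hsr : low < a (s + 1)) :
    ∀ j, j < n → (∃ x, a j ≤ x ∧ x < a (j + 1) ∧ low ≤ x ∧ x ≤ high) →
      s ≤ j ∧ ∀ i, s ≤ i → i ≤ j →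
        ∃ x, a i ≤ x ∧ x < a (i + 1) ∧ low ≤ x ∧ x ≤ high := by
  have ha : StrictMonoOn a (Set.Iic n) := fun i hi j hj hij => hmono i j hij hj
  have hleaf : ∀ i, i < n → a i < a (i + 1) := fun i hi => hmono i (i + 1) i.lt_succ_self hi
  intro j hj hmeet
  obtain ⟨hlh, hjh, hlj⟩ := (exists_Ico_Icc_iff (hleaf j hj)).mp hmeet
  have hsj : s ≤ j := Nat.lt_succ_iff.mp ((ha.lt_iff_lt hs.le hj).mp (hsl.trans_lt hlj))
  refine ⟨hsj, fun i hsi hij =>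
    (exists_Ico_Icc_iff (hleaf i (hij.trans_lt hj))).mpr ⟨hlh, ?_, ?_⟩⟩
  · exact (ha.monotoneOn (hij.trans hj.le) hj.le hij).trans hjh
  · exact hsr.trans_le (ha.monotoneOn (Nat.succ_le_of_lt hs) (Nat.succ_le_of_lt (hij.trans_lt hj))
      (Nat.succ_le_succ hsi))

/-- Leaves `l 0, ..., l (n-1)` are linked by right pointers, leaf `i` having
key range `[a i, a (i+1))` with strictly increasing boundaries
`a 0 < a 1 < ... < a n`.  A range query `[low, high]` (with
`a 0 ≤ low ≤ high < a n`) starts at the unique leaf `s` whose key range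
contains `low` and advances to the right while the current leaf's key range
intersects `[low, high]`.  Then every leaf whose key range intersects
`[low, high]` is visited: it lies at an index `j ≥ s`, and the key ranges of
all leaves between `s` and `j` also intersect `[low, high]`, so the traversal
reaches it. -/
theorem range_scan_visits_all_intersecting_leaves {K : Type*} [LinearOrder K]
    (n : ℕ) (hn : 0 < n) (a : ℕ → K)
    (hmono : ∀ i j, i < j → j ≤ n → a i < a j)
    (low high : K) (hlh : low ≤ high) (h0 : a 0 ≤ low) (hhi : high < a n)
    (s : ℕ) (hs : s < n) (hsl : a s ≤ low) (hsr : low < a (s + 1)) :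
    ∀ j, j < n → (∃ x, a j ≤ x ∧ x < a (j + 1) ∧ low ≤ x ∧ x ≤ high) →
      s ≤ j ∧ ∀ i, s ≤ i → i ≤ j →
        ∃ x, a i ≤ x ∧ x < a (i + 1) ∧ low ≤ x ∧ x ≤ high :=
  range_scan_visits_all_intersecting_leaves_general n a hmono low high s hs hsl hsr
end
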